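/- (Theorem 4, critical detection efficiency with noise.) Let G = (V, E) be a finite simple graph with independence number α(G) < |V| and xi number Ξ(G), let d ≥ 1, let v : V → (Fin d → ℂ) be an orthonormal representation of G in ℂ^d, let ψ(k,l) = 1/√d if k = l and 0 otherwise, and set P(i,j) = |⟨v_i ⊗ v̄_j, ψ⟩|². For W ∈ [0, 1], define P_W(i, j) = W·P(i, j) + (1 − W)/d² and I(W) = Σ_{i ∈ V} P_W(i, i) − (1/(2·Ξ(G))) · Σ_{{i,j} ∈ E} (P_W(i, j) + P_W(j, i)). Set D = |V|·(W·(d − 1) + 1) − |E|·(1 − W)/Ξ(G) and suppose D > 0. Then for every real η ≥ 0, η² · I(W) > α(G) if and only if η² > α(G)·d²/D. -/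

import Mathlib

open scoped Classical
open ComplexConjugate

/-- The independence number of a finite simple graph: the largest cardinality of a
set of pairwise nonadjacent vertices. -/
noncomputable def indepNum {V : Type*} [Fintype V] (G : SimpleGraph V) : ℕ :=
  sSup {n | ∃ s : Finset V, (∀ u ∈ s, ∀ v ∈ s, u ≠ v → ¬ G.Adj u v) ∧ s.card = n}

/-- `xiOf G S = max_{v ∈ S} |{u ∈ S : u adjacent to v}|`. -/
noncomputable def xiOf {V : Type*} [Fintype V] (G : SimpleGraph V) (S : Finset V) : ℕ :=
  S.sup fun v => (S.filter fun u => G.Adj u v).card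

/-- The xi number of a graph: the minimum of `xiOf G S` over all vertex subsets `S`
with `|S| = α(G) + 1`. -/
noncomputable def xiNum {V : Type*} [Fintype V] (G : SimpleGraph V) : ℕ :=
  sInf {k | ∃ S : Finset V, S.card = indepNum G + 1 ∧ xiOf G S = k}

/-!
Against the maximally entangled state the vector `v_i ⊗ v̄_j` has amplitude
`⟨v_i, v_j⟩ / √d`, so `P(i, j) = |⟨v_i, v_j⟩|² / d`: this is `1/d` on the diagonal and `0`
on edges by orthonormality. Hence every diagonal term of `I(W)` equals `W/d + (1 - W)/d²`,
every edge term equals `2(1 - W)/d²`, and `I(W) = D / d²`; the threshold for `η` follows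
by clearing the positive denominators `D` and `d²`.
-/

lemma sum_conj_tensor_mul_diag {ι : Type*} [Fintype ι] [DecidableEq ι] (a b : ι → ℂ)
    (c : ℂ) (ψ : ι × ι → ℂ) (hψ : ∀ p : ι × ι, ψ p = if p.1 = p.2 then c else 0) :
    ∑ p : ι × ι, conj (a p.1 * conj (b p.2)) * ψ p = c * ∑ k, conj (a k) * b k := by
  rw [Fintype.sum_prod_type, Finset.mul_sum]
  refine Finset.sum_congr rfl fun k _ => ?_
  rw [Finset.sum_eq_single k]
  · simp [hψ]
    ring
  · intro l _ hl
    simp [hψ, hl.symm]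
  · simp

lemma norm_inv_sqrt_mul_sq {d : ℕ} (hd : 1 ≤ d) (z : ℂ) :
    ‖((1 / Real.sqrt d : ℝ) : ℂ) * z‖ ^ 2 = ‖z‖ ^ 2 / d := by
  have hd0 : (0 : ℝ) ≤ d := Nat.cast_nonneg d
  rw [norm_mul, Complex.norm_real, Real.norm_eq_abs, abs_of_nonneg (by positivity), mul_pow,
    div_pow, one_pow, Real.sq_sqrt hd0]
  ring

lemma sum_edgeFinset_lift_of_adj {V β : Type*} [Fintype V] [AddCommMonoid β]
    (G : SimpleGraph V) (f : {f : V → V → β // ∀ i j, f i j = f j i}) (c : β)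
    (hf : ∀ i j, G.Adj i j → f.1 i j = c) :
    ∑ e ∈ G.edgeFinset, Sym2.lift f e = G.edgeFinset.card • c := by
  refine Finset.sum_const (b := c) ▸ Finset.sum_congr rfl fun e he => ?_
  induction e using Sym2.ind with
  | _ i j => exact hf i j (G.mem_edgeFinset.mp he)

/-- Theorem 4, critical detection efficiency with noise: with
visibility `W` and detection efficiency `η`, setting
`D = |V|·(W·(d − 1) + 1) − |E|·(1 − W)/Ξ(G) > 0`, one has
`η² · I(W) > α(G) ↔ η² > α(G)·d²/D`. -/
theorem stmt_6 {V : Type*} [Fintype V] (G : SimpleGraph V)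
    (d : ℕ) (hd : 1 ≤ d) (v : V → Fin d → ℂ)
    (hunit : ∀ i, ∑ k, conj (v i k) * v i k = 1)
    (horth : ∀ i j, G.Adj i j → ∑ k, conj (v i k) * v j k = 0)
    (ψ : Fin d × Fin d → ℂ)
    (hψ : ∀ p : Fin d × Fin d, ψ p = if p.1 = p.2 then ((1 / Real.sqrt d : ℝ) : ℂ) else 0)
    (P : V → V → ℝ)
    (hP : ∀ i j, P i j =
      ‖∑ p : Fin d × Fin d, conj (v i p.1 * conj (v j p.2)) * ψ p‖ ^ 2)
    (W : ℝ)
    (PW : V → V → ℝ)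
    (hPW : ∀ i j, PW i j = W * P i j + (1 - W) / (d : ℝ) ^ 2)
    (I : ℝ)
    (hI : I = ∑ i, PW i i -
      (1 / (2 * (xiNum G : ℝ))) *
        ∑ e ∈ G.edgeFinset, Sym2.lift ⟨fun i j => PW i j + PW j i, fun i j => by ring⟩ e)
    (D : ℝ)
    (hD : D = (Fintype.card V : ℝ) * (W * ((d : ℝ) - 1) + 1)
      - (G.edgeFinset.card : ℝ) * (1 - W) / (xiNum G : ℝ))
    (hDpos : 0 < D)
    (η : ℝ) :
    η ^ 2 * I > indepNum G ↔ η ^ 2 > (indepNum G : ℝ) * (d : ℝ) ^ 2 / D := by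
  have hd0 : (0 : ℝ) < d := by exact_mod_cast hd
  have hP_eq (i j : V) : P i j = ‖∑ k, conj (v i k) * v j k‖ ^ 2 / d := by
    rw [hP, sum_conj_tensor_mul_diag _ _ _ ψ hψ, norm_inv_sqrt_mul_sq hd]
  have hPW_diag (i : V) : PW i i = W / d + (1 - W) / (d : ℝ) ^ 2 := by
    rw [hPW, hP_eq, hunit]
    simp [div_eq_mul_inv]
  have hPW_edge (i j : V) (h : G.Adj i j) : PW i j + PW j i = 2 * (1 - W) / (d : ℝ) ^ 2 := by
    rw [hPW, hPW, hP_eq, hP_eq, horth i j h, horth j i h.symm]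
    simp only [norm_zero]
    ring
  have hID : I = D / (d : ℝ) ^ 2 := by
    rw [hI, hD, Finset.sum_congr rfl fun i _ => hPW_diag i,
      sum_edgeFinset_lift_of_adj G _ _ hPW_edge]
    simp only [Finset.sum_const, Finset.card_univ, nsmul_eq_mul]
    field_simp
    ring
  rw [hID, gt_iff_lt, gt_iff_lt, div_lt_iff₀ hDpos, ← mul_div_assoc, lt_div_iff₀ (by positivity)]
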